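/- (Checkpoints justified at a slot extend only the honest target chain; implicit in the proof of the Liveness theorem.) Let n ≥ 1, V a set of FFG-votes among n validators, c : ℕ, χ_p a chain, and H a set of validators with 3·|H| ≥ 2n such that every vote (S, T, v) ∈ V with v ∈ H and T.c = c satisfies T.chain ⪯ χ_p. Then every checkpoint 𝒞 with 𝒞.c = c that is justified w.r.t. V satisfies 𝒞.chain ⪯ χ_p. -/

import Mathlib

structure Block (β : Type) where
  body : β
  p : ℤ

def genesisBlock {β : Type} (g : β) : Block β := ⟨g, -1⟩

structure Chain (β : Type) (g : β) where
  blocks : List (Block β)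
  ne : blocks ≠ []
  head_genesis : blocks.head? = some (genesisBlock g)
  strict : List.Chain' (fun a b => a.p < b.p) blocks

namespace Chain

variable {β : Type} {g : β}

/-- The height of a chain: the slot of its last block. -/
def height (χ : Chain β g) : ℤ := (χ.blocks.getLast χ.ne).p

/-- `χ₁ ⪯ χ₂`: `χ₁` is a prefix of `χ₂`. -/
def IsPrefix (χ₁ χ₂ : Chain β g) : Prop := χ₁.blocks <+: χ₂.blocks

/-- Two chains conflict if neither is a prefix of the other. -/
def Conflicts (χ₁ χ₂ : Chain β g) : Prop := ¬ χ₁.IsPrefix χ₂ ∧ ¬ χ₂.IsPrefix χ₁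

end Chain

def genesisChain {β : Type} (g : β) : Chain β g where
  blocks := [genesisBlock g]
  ne := by simp
  head_genesis := rfl
  strict := List.isChain_singleton _

structure Checkpoint (β : Type) (g : β) where
  chain : Chain β g
  c : ℕ
  height_le : chain.height ≤ (c : ℤ)

def genesisCheckpoint {β : Type} (g : β) : Checkpoint β g where
  chain := genesisChain g
  c := 0
  height_le := by simp [Chain.height, genesisChain, genesisBlock]

namespace Checkpoint

variable {β : Type} {g : β}

/-- Lexicographic order on checkpoints: `𝒞 ≤ 𝒞′`. -/
def le (C C' : Checkpoint β g) : Prop :=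
  C.c < C'.c ∨ (C.c = C'.c ∧ C.chain.height ≤ C'.chain.height)

/-- Strict lexicographic order on checkpoints: `𝒞 < 𝒞′`. -/
def lt (C C' : Checkpoint β g) : Prop :=
  C.c < C'.c ∨ (C.c = C'.c ∧ C.chain.height < C'.chain.height)

end Checkpoint

structure FFGVote (n : ℕ) (β : Type) (g : β) where
  source : Checkpoint β g
  target : Checkpoint β g
  sender : Fin n

def FFGVote.Valid {n : ℕ} {β : Type} {g : β} (m : FFGVote n β g) : Prop :=
  m.source.chain.IsPrefix m.target.chain ∧ m.source.c < m.target.c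

/-- The set of senders of a set of votes. -/
def senders {n : ℕ} {β : Type} {g : β} (M : Set (FFGVote n β g)) : Set (Fin n) :=
  {v | ∃ m ∈ M, m.sender = v}

/-- A checkpoint is justified w.r.t. a set of votes `V`. -/
inductive Justified {n : ℕ} {β : Type} {g : β} (V : Set (FFGVote n β g)) :
    Checkpoint β g → Prop
  | genesis : Justified V (genesisCheckpoint g)
  | step (C : Checkpoint β g) (M : Set (FFGVote n β g))
      (hMV : M ⊆ V)
      (hcard : 2 * n ≤ 3 * (senders M).ncard)
      (hjust : ∀ m ∈ M, Justified V m.source)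
      (hvotes : ∀ m ∈ M, m.Valid ∧
        m.source.chain.IsPrefix C.chain ∧ C.chain.IsPrefix m.target.chain ∧
        m.target.c = C.c) :
      Justified V C

/-- A checkpoint is finalized w.r.t. a set of votes `V`. -/
def Finalized {n : ℕ} {β : Type} {g : β} (V : Set (FFGVote n β g))
    (C : Checkpoint β g) : Prop :=
  C = genesisCheckpoint g ∨
    (Justified V C ∧ ∃ M ⊆ V, 2 * n ≤ 3 * (senders M).ncard ∧
      ∀ m ∈ M, m.Valid ∧ m.source = C ∧ m.target.c = C.c + 1)

/-- E1 (double voting). -/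
def ViolatesE1 {n : ℕ} {β : Type} {g : β} (V : Set (FFGVote n β g)) (v : Fin n) : Prop :=
  ∃ m₁ ∈ V, ∃ m₂ ∈ V, m₁.sender = v ∧ m₂.sender = v ∧ m₁ ≠ m₂ ∧
    m₁.target.c = m₂.target.c

/-- E2 (surround voting). -/
def ViolatesE2 {n : ℕ} {β : Type} {g : β} (V : Set (FFGVote n β g)) (v : Fin n) : Prop :=
  ∃ m₁ ∈ V, ∃ m₂ ∈ V, m₁.sender = v ∧ m₂.sender = v ∧
    m₂.source.lt m₁.source ∧ m₁.target.c < m₂.target.c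

structure Ack (n : ℕ) (β : Type) (g : β) where
  cp : Checkpoint β g
  sender : Fin n

/-- E3 (ack surround). -/
def ViolatesE3 {n : ℕ} {β : Type} {g : β} (V : Set (FFGVote n β g))
    (A : Set (Ack n β g)) (v : Fin n) : Prop :=
  ∃ m ∈ V, ∃ a ∈ A, m.sender = v ∧ a.sender = v ∧
    m.source.lt a.cp ∧ a.cp.c < m.target.c

/-- Finalized with acknowledgments. -/
def FinalizedWithAcks {n : ℕ} {β : Type} {g : β} (V : Set (FFGVote n β g))
    (A : Set (Ack n β g)) (C : Checkpoint β g) : Prop :=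
  Finalized V C ∨
    (Justified V C ∧ 2 * n ≤ 3 * (Set.ncard {v : Fin n | (⟨C, v⟩ : Ack n β g) ∈ A}))

/-! A non-genesis checkpoint is justified by votes from a two-thirds quorum of senders, each
targeting an extension of its chain at its slot. Two two-thirds quorums among `n ≥ 1` validators
intersect, so one of these votes comes from `H`, and its target is a prefix of `χp`. -/

theorem Set.inter_nonempty_of_card_lt_ncard_add_ncard {α : Type*} [Finite α] {s t : Set α}
    (h : Nat.card α < s.ncard + t.ncard) : (s ∩ t).Nonempty := by
  rw [Set.nonempty_iff_ne_empty]
  intro hst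
  have := Set.ncard_inter_add_ncard_union s t
  rw [hst, Set.ncard_empty, zero_add] at this
  have := Set.ncard_le_card (s ∪ t)
  omega

theorem Fin.inter_nonempty_of_two_thirds {n : ℕ} (hn : 1 ≤ n) {A B : Set (Fin n)}
    (hA : 2 * n ≤ 3 * A.ncard) (hB : 2 * n ≤ 3 * B.ncard) : (A ∩ B).Nonempty :=
  Set.inter_nonempty_of_card_lt_ncard_add_ncard <| by
    rw [Nat.card_eq_fintype_card, Fintype.card_fin]
    omega

namespace Chain

variable {β : Type} {g : β}

theorem IsPrefix.trans {χ₁ χ₂ χ₃ : Chain β g} (h₁₂ : χ₁.IsPrefix χ₂)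
    (h₂₃ : χ₂.IsPrefix χ₃) : χ₁.IsPrefix χ₃ :=
  List.IsPrefix.trans h₁₂ h₂₃

theorem genesisChain_isPrefix (χ : Chain β g) : (genesisChain g).IsPrefix χ := by
  obtain ⟨b, l, hbl⟩ := List.exists_cons_of_ne_nil χ.ne
  have hb : b = genesisBlock g := by simpa [hbl] using χ.head_genesis
  show [genesisBlock g] <+: χ.blocks
  rw [hbl, hb]
  exact List.prefix_cons_inj _ |>.mpr List.nil_prefix

end Chain

theorem Justified.eq_genesis_or_exists_vote_of_quorum {n : ℕ} {β : Type} {g : β} (hn : 1 ≤ n)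
    {V : Set (FFGVote n β g)} {H : Set (Fin n)} (hH : 2 * n ≤ 3 * H.ncard)
    {C : Checkpoint β g} (hC : Justified V C) :
    C = genesisCheckpoint g ∨ ∃ m ∈ V, m.sender ∈ H ∧
      C.chain.IsPrefix m.target.chain ∧ m.target.c = C.c := by
  cases hC with
  | genesis => exact Or.inl rfl
  | step _ M hMV hcard _ hvotes =>
    obtain ⟨v, ⟨m, hmM, rfl⟩, hvH⟩ := Fin.inter_nonempty_of_two_thirds hn hcard hH
    obtain ⟨-, -, hCm, hc⟩ := hvotes m hmM
    exact Or.inr ⟨m, hMV hmM, hvH, hCm, hc⟩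

/-- checkpoints justified at a slot extend only the honest target
chain. -/
theorem justified_extends_honest_target
    {n : ℕ} {β : Type} {g : β} (hn : 1 ≤ n) (V : Set (FFGVote n β g)) (c : ℕ)
    (χp : Chain β g) (H : Set (Fin n)) (hH : 2 * n ≤ 3 * H.ncard)
    (hhonest : ∀ m ∈ V, m.sender ∈ H → m.target.c = c → m.target.chain.IsPrefix χp) :
    ∀ C : Checkpoint β g, C.c = c → Justified V C → C.chain.IsPrefix χp := by
  intro C hc hC
  rcases hC.eq_genesis_or_exists_vote_of_quorum hn hH with rfl | ⟨m, hmV, hmH, hCm, hmc⟩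
  · exact Chain.genesisChain_isPrefix χp
  · exact hCm.trans (hhonest m hmV hmH (hmc.trans hc))
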